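/- Let G be a 1-tough graph with minimum degree δ, C a longest cycle, and P a longest path in G \ C with endpoints x₁, x₂ of length p where 2 ≤ p = δ − 1. If s = |N_C(x₁) ∪ N_C(x₂)| measured as the number of elementary segments satisfies s ≥ 3 and each segment created on C by N_C(x₁) ∪ N_C(x₂) containing an attachment of both endpoints has length ≥ p + 2, then |C| > 2δ + 2; in particular, under the additional constraint |C| = 2δ + 2 one must have s ≤ 2. -/

import Mathlib

/-!
If `w ∈ N_C(x₁)` and `z ∈ N_C(x₂)` are distinct, either arc of `C` between them can be replaced
by the path `w x₁ P x₂ z` of length `p + 2`, so by maximality of `C` both arcs have length at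
least `p + 2`. An end of a longest path of `G \ C` has all its neighbours off `C` on that path,
so `δ = p + 1` forces `N_C(x₁)` and `N_C(x₂)` to be nonempty. With three attachments there is a
`w` forming such a pair with two distinct vertices `a` and `b`; measured along `C` from `w`,
these sit at distinct positions in `[p + 2, |C| - p - 2]`, whence `|C| ≥ 2p + 5 = 2δ + 3`.
-/

open SimpleGraph Finset

namespace Paper

variable {V : Type*}

/-- Number of connected components of `G` after deleting the vertex set `S`. -/
noncomputable def compCount (G : SimpleGraph V) (S : Set V) : ℕ :=
  Nat.card ((G.induce Sᶜ).ConnectedComponent)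

/-- `G` is 1-tough: every cutset `S` satisfies `|S| ≥ s(G \ S)`. -/
def OneTough [Fintype V] (G : SimpleGraph V) : Prop :=
  ∀ S : Finset V, 1 < compCount G ↑S → compCount G ↑S ≤ S.card

/-- The toughness of `G` equals 1. -/
def ToughnessEqOne [Fintype V] (G : SimpleGraph V) : Prop :=
  OneTough G ∧ ∃ S : Finset V, 1 < compCount G ↑S ∧ compCount G ↑S = S.card

/-- The vertex connectivity of `G` equals 2. -/
def ConnectivityEqTwo [Fintype V] (G : SimpleGraph V) : Prop :=
  (∀ S : Finset V, S.card ≤ 1 → (G.induce (↑S : Set V)ᶜ).Connected) ∧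
  ∃ S : Finset V, S.card = 2 ∧ ¬ (G.induce (↑S : Set V)ᶜ).Connected

/-- `G` is 3-connected: it stays connected after removing any 2 vertices. -/
def ThreeConnected [Fintype V] (G : SimpleGraph V) : Prop :=
  ∀ S : Finset V, S.card ≤ 2 → (G.induce (↑S : Set V)ᶜ).Connected

/-- `c` is a longest cycle of `G`. -/
def IsLongestCycle {G : SimpleGraph V} {u : V} (c : G.Walk u u) : Prop :=
  c.IsCycle ∧ ∀ (v : V) (d : G.Walk v v), d.IsCycle → d.length ≤ c.length

/-- The cycle `c` is dominating: `G \ V(c)` is edgeless. -/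
def IsDominating {G : SimpleGraph V} {u : V} (c : G.Walk u u) : Prop :=
  ∀ a b : V, G.Adj a b → a ∈ c.support ∨ b ∈ c.support

/-- The walk `p` avoids all vertices of the cycle `c`. -/
def AvoidsCycle {G : SimpleGraph V} {u x y : V} (c : G.Walk u u) (p : G.Walk x y) : Prop :=
  ∀ v ∈ p.support, v ∉ c.support

/-- `p` is a longest path of `G \ V(c)`. -/
def IsLongestPathOutside {G : SimpleGraph V} {u x y : V} (c : G.Walk u u)
    (p : G.Walk x y) : Prop :=
  p.IsPath ∧ AvoidsCycle c p ∧
  ∀ (a b : V) (q : G.Walk a b), q.IsPath → AvoidsCycle c q → q.length ≤ p.length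

/-- `N_C(x)`: the neighbors of `x` lying on the cycle `c`. -/
def NC [Fintype V] [DecidableEq V] (G : SimpleGraph V) [DecidableRel G.Adj]
    {u : V} (c : G.Walk u u) (x : V) : Finset V :=
  (G.neighborFinset x).filter (fun v => v ∈ c.support)

/-- The interior vertices of a segment (the walk minus its endpoints). -/
def interior {G : SimpleGraph V} {a b : V} (I : G.Walk a b) : Set V :=
  {v | v ∈ I.support ∧ v ≠ a ∧ v ≠ b}

/-- `I` is an elementary segment of the cycle `c` created by the attachment set `A`:
an arc of `c` between consecutive vertices of `A`. -/
def IsSegment {G : SimpleGraph V} {u : V} (c : G.Walk u u)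
    (A : Finset V) {a b : V} (I : G.Walk a b) : Prop :=
  I.IsPath ∧ 1 ≤ I.length ∧ a ∈ A ∧ b ∈ A ∧
  (∀ v ∈ I.support, v ∈ c.support) ∧
  (∀ e ∈ I.edges, e ∈ c.edges) ∧
  ∀ v ∈ interior I, v ∉ A

/-- `L` is an intermediate path between the elementary segments `Ia` and `Ib`:
it joins interior vertices of `Ia` and `Ib` and is internally disjoint from `c ∪ P`. -/
def IsIntermediatePath {G : SimpleGraph V} {u x y : V} (c : G.Walk u u) (P : G.Walk x y)
    {a b a' b' z w : V} (Ia : G.Walk a b) (Ib : G.Walk a' b') (L : G.Walk z w) : Prop :=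
  L.IsPath ∧ 1 ≤ L.length ∧ z ∈ interior Ia ∧ w ∈ interior Ib ∧
  ∀ v ∈ L.support, (v ∈ c.support ∨ v ∈ P.support) → v = z ∨ v = w

/-- Membership in the exceptional class `𝔉₁`. -/
def InF1 [Fintype V] (H : SimpleGraph V) [DecidableRel H.Adj] (d : ℕ) : Prop :=
  ∃ (x y₁ y₂ y₃ : V) (A : Fin 3 → Set V),
    (∀ i j, i ≠ j → A i ∩ A j = {x}) ∧
    (⋃ i, A i) = Set.univ ∧
    y₁ ∈ A 0 ∧ y₂ ∈ A 1 ∧ y₃ ∈ A 2 ∧ y₁ ≠ x ∧ y₂ ≠ x ∧ y₃ ≠ x ∧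
    H.Adj y₁ y₂ ∧ H.Adj y₂ y₃ ∧ H.Adj y₁ y₃ ∧
    (∀ a b : V, H.Adj a b → (∃ i, a ∈ A i ∧ b ∈ A i) ∨
      s(a, b) ∈ ({s(y₁, y₂), s(y₂, y₃), s(y₁, y₃)} : Set (Sym2 V))) ∧
    (∀ i, (H.induce (A i)).Connected) ∧
    Nat.card (A 0) = d + 1 ∧ Nat.card (A 1) = d + 1 ∧
    d + 1 ≤ Nat.card (A 2) ∧ Nat.card (A 2) ≤ d + 2 ∧
    H.minDegree = d ∧ 3 ≤ d

/-- Membership in the exceptional class `𝔉₂`. -/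
def InF2 [Fintype V] (H : SimpleGraph V) [DecidableRel H.Adj] : Prop :=
  ∃ (x z y₁ y₂ y₃ : V) (A : Fin 3 → Set V),
    (∀ i j, i ≠ j → A i ∩ A j = {x}) ∧
    ((⋃ i, A i) ∪ {z}) = Set.univ ∧ z ∉ ⋃ i, A i ∧
    y₁ ∈ A 0 ∧ y₂ ∈ A 1 ∧ y₃ ∈ A 2 ∧ y₁ ≠ x ∧ y₂ ≠ x ∧ y₃ ≠ x ∧
    H.Adj z y₁ ∧ H.Adj z y₂ ∧ H.Adj z y₃ ∧ H.Adj y₁ y₂ ∧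
    (∀ a b : V, H.Adj a b → (∃ i, a ∈ A i ∧ b ∈ A i) ∨
      s(a, b) ∈ ({s(z, y₁), s(z, y₂), s(z, y₃), s(y₁, y₂), s(y₁, y₃), s(y₂, y₃),
        s(z, x)} : Set (Sym2 V))) ∧
    (∀ i, Nat.card (A i) = 4) ∧ H.minDegree = 3

/-- Membership in the exceptional class `𝔉₃`. -/
def InF3 [Fintype V] (H : SimpleGraph V) [DecidableRel H.Adj] : Prop :=
  ∃ (x z y₁ y₂ y₃ : V) (A : Fin 3 → Set V),
    (∀ i j, i ≠ j → A i ∩ A j = {x}) ∧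
    ((⋃ i, A i) ∪ {z}) = Set.univ ∧ z ∉ ⋃ i, A i ∧
    y₁ ∈ A 0 ∧ y₂ ∈ A 1 ∧ y₃ ∈ A 2 ∧ y₁ ≠ x ∧ y₂ ≠ x ∧ y₃ ≠ x ∧
    H.Adj z y₁ ∧ H.Adj z y₂ ∧ H.Adj z y₃ ∧ H.Adj z x ∧ H.Adj y₁ y₂ ∧
    (∀ a b : V, H.Adj a b → (∃ i, a ∈ A i ∧ b ∈ A i) ∨
      s(a, b) ∈ ({s(z, y₁), s(z, y₂), s(z, y₃), s(z, x), s(y₁, y₂), s(y₁, y₃),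
        s(y₂, y₃)} : Set (Sym2 V))) ∧
    (∀ i, Nat.card (A i) = 5) ∧ H.minDegree = 4

/-- Membership in the exceptional class `𝔉₄`. -/
def InF4 [Fintype V] (H : SimpleGraph V) [DecidableRel H.Adj] : Prop :=
  ∃ (x y : V) (z : Fin 4 → V) (A : Fin 4 → Set V),
    x ≠ y ∧
    (∀ i j, i ≠ j → A i ∩ A j = {x, y}) ∧
    (⋃ i, A i) = Set.univ ∧
    (∀ i, z i ∈ A i ∧ z i ≠ x ∧ z i ≠ y) ∧
    H.Adj (z 0) (z 1) ∧ H.Adj (z 1) (z 2) ∧ H.Adj (z 0) (z 2) ∧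
    (∀ a b : V, H.Adj a b → (∃ i, a ∈ A i ∧ b ∈ A i) ∨
      s(a, b) ∈ ({s(z 0, z 1), s(z 1, z 2), s(z 0, z 2)} : Set (Sym2 V))) ∧
    (∀ i, Nat.card (A i) = 5) ∧ H.minDegree = 4

section LongestCycle

variable {G : SimpleGraph V}

lemma AvoidsCycle.reverse {u x y : V} {c : G.Walk u u} {P : G.Walk x y} (hP : AvoidsCycle c P) :
    AvoidsCycle c P.reverse := fun v hv => hP v (by simpa using hv)

lemma AvoidsCycle.rotate [DecidableEq V] {u w x y : V} {c : G.Walk u u} {P : G.Walk x y}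
    (hP : AvoidsCycle c P) (hw : w ∈ c.support) : AvoidsCycle (c.rotate w hw) P :=
  fun v hv => by simpa using hP v hv

lemma IsLongestPathOutside.reverse {u x y : V} {c : G.Walk u u} {P : G.Walk x y}
    (hP : IsLongestPathOutside c P) : IsLongestPathOutside c P.reverse :=
  ⟨hP.1.reverse, hP.2.1.reverse, fun a b q hq hqc => by simpa using hP.2.2 a b q hq hqc⟩

lemma IsLongestCycle.rotate [DecidableEq V] {u w : V} {c : G.Walk u u} (hc : IsLongestCycle c)
    (hw : w ∈ c.support) : IsLongestCycle (c.rotate w hw) :=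
  ⟨hc.1.rotate hw, fun v d hd => by simpa using hc.2 v d hd⟩

lemma mem_NC [Fintype V] [DecidableEq V] [DecidableRel G.Adj] {u x v : V} {c : G.Walk u u} :
    v ∈ NC G c x ↔ G.Adj x v ∧ v ∈ c.support := by
  simp [NC]

lemma IsLongestPathOutside.NC_nonempty [Fintype V] [DecidableEq V] [DecidableRel G.Adj]
    {u x y : V} {c : G.Walk u u} {Q : G.Walk x y} (hQ : IsLongestPathOutside c Q)
    (hd : Q.length + 1 ≤ G.minDegree) : (NC G c x).Nonempty := by
  by_contra hempty
  have hsub : G.neighborFinset x ⊆ Q.support.toFinset.erase x := by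
    intro v hv
    rw [mem_neighborFinset] at hv
    have hvc : v ∉ c.support := fun hvc => hempty ⟨v, mem_NC.2 ⟨hv, hvc⟩⟩
    have hvQ : v ∈ Q.support := by
      by_contra hvQ
      have hext : AvoidsCycle c (Walk.cons hv.symm Q) := by
        intro z hz
        rcases List.mem_cons.1 (by simpa using hz) with rfl | hz
        exacts [hvc, hQ.2.1 z hz]
      have := hQ.2.2 v y _ (hQ.1.cons hvQ) hext
      simp at this
    simpa [hv.ne'] using hvQ
  have hdeg : G.degree x ≤ Q.length := calc
    G.degree x ≤ (Q.support.toFinset.erase x).card := card_le_card hsub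
    _ = Q.support.toFinset.card - 1 := card_erase_of_mem (by simp)
    _ ≤ Q.support.length - 1 := Nat.sub_le_sub_right (List.toFinset_card_le _) 1
    _ = Q.length := by simp
  have := G.minDegree_le_degree x
  omega

lemma IsLongestCycle.length_add_length_add_two_le {u x y a b : V} {c : G.Walk u u}
    (hc : IsLongestCycle c) {P : G.Walk x y} (hP : P.IsPath) (hPc : AvoidsCycle c P)
    {K : G.Walk a b} (hK : K.IsPath) (hKc : ∀ v ∈ K.support, v ∈ c.support) (hab : a ≠ b)
    (hya : G.Adj y a) (hbx : G.Adj b x) :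
    P.length + K.length + 2 ≤ c.length := by
  have hxc : x ∉ c.support := hPc x P.start_mem_support
  have hyc : y ∉ c.support := hPc y P.end_mem_support
  have hbc : b ∈ c.support := hKc b K.end_mem_support
  have hpath : (P.append (Walk.cons hya K)).IsPath := by
    rw [Walk.isPath_def, Walk.support_append, Walk.support_cons, List.tail_cons]
    exact hP.support_nodup.append hK.support_nodup fun v hv hv' => hPc v hv (hKc v hv')
  have hedge : s(b, x) ∉ (P.append (Walk.cons hya K)).edges := by
    rw [Walk.edges_append, List.mem_append, Walk.edges_cons, List.mem_cons]
    rintro (h | h | h)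
    · exact hPc b (P.fst_mem_support_of_mem_edges h) hbc
    · rcases Sym2.eq_iff.1 h with ⟨rfl, -⟩ | ⟨rfl, -⟩
      exacts [hyc hbc, hab rfl]
    · exact hxc (hKc x (K.snd_mem_support_of_mem_edges h))
  have := hc.2 b _ ((Walk.cons_isCycle_iff _ hbx).2 ⟨hpath, hedge⟩)
  simp only [Walk.length_cons, Walk.length_append] at this
  omega

lemma IsLongestCycle.length_takeUntil_bounds [DecidableEq V] {w x y z : V} {c : G.Walk w w}
    (hc : IsLongestCycle c) {P : G.Walk x y} (hP : P.IsPath) (hPc : AvoidsCycle c P)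
    (hyw : G.Adj y w) (hzx : G.Adj z x) (hz : z ∈ c.support) (hzw : z ≠ w) :
    P.length + 2 ≤ (c.takeUntil z hz).length ∧
      (c.takeUntil z hz).length + (P.length + 2) ≤ c.length := by
  have hsum : (c.takeUntil z hz).length + (c.dropUntil z hz).length = c.length := by
    rw [← Walk.length_append, Walk.take_spec]
  have htake := hc.length_add_length_add_two_le hP hPc (hc.1.isPath_takeUntil hz)
    (fun v hv => c.support_takeUntil_subset_support hz hv) hzw.symm hyw hzx
  have hdrop_path : (c.dropUntil z hz).IsPath :=
    Walk.IsCycle.isPath_of_append_right (Walk.not_nil_of_ne hzw.symm)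
      (by rw [c.take_spec]; exact hc.1)
  have hdrop := hc.length_add_length_add_two_le hP hPc hdrop_path.reverse
    (fun v hv => c.support_dropUntil_subset_support hz (by simpa using hv)) hzw.symm hyw hzx
  rw [Walk.length_reverse] at hdrop
  omega

lemma IsLongestCycle.two_mul_length_add_five_le [Fintype V] [DecidableEq V]
    [DecidableRel G.Adj] {u x₁ x₂ w a b : V} {c : G.Walk u u} (hc : IsLongestCycle c)
    {P : G.Walk x₁ x₂} (hP : P.IsPath) (hPc : AvoidsCycle c P)
    (hab : a ≠ b) (haw : a ≠ w) (hbw : b ≠ w)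
    (ha : w ∈ NC G c x₁ ∧ a ∈ NC G c x₂ ∨ w ∈ NC G c x₂ ∧ a ∈ NC G c x₁)
    (hb : w ∈ NC G c x₁ ∧ b ∈ NC G c x₂ ∨ w ∈ NC G c x₂ ∧ b ∈ NC G c x₁) :
    2 * P.length + 5 ≤ c.length := by
  have hw : w ∈ c.support := by rcases ha with h | h <;> exact (mem_NC.1 h.1).2
  have hc' := hc.rotate hw
  have hPc' := hPc.rotate hw
  have bounds : ∀ z, z ≠ w →
      (w ∈ NC G c x₁ ∧ z ∈ NC G c x₂ ∨ w ∈ NC G c x₂ ∧ z ∈ NC G c x₁) →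
      ∃ hz : z ∈ (c.rotate w hw).support,
        P.length + 2 ≤ ((c.rotate w hw).takeUntil z hz).length ∧
        ((c.rotate w hw).takeUntil z hz).length + (P.length + 2) ≤ c.length := by
    rintro z hzw (⟨hw₁, hz₂⟩ | ⟨hw₂, hz₁⟩)
    · rw [mem_NC] at hw₁ hz₂
      refine ⟨by simpa using hz₂.2, ?_⟩
      simpa using hc'.length_takeUntil_bounds hP.reverse hPc'.reverse hw₁.1 hz₂.1.symm _ hzw
    · rw [mem_NC] at hw₂ hz₁
      refine ⟨by simpa using hz₁.2, ?_⟩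
      simpa using hc'.length_takeUntil_bounds hP hPc' hw₂.1 hz₁.1.symm _ hzw
  obtain ⟨ha', ha_lo, ha_hi⟩ := bounds a haw ha
  obtain ⟨hb', hb_lo, hb_hi⟩ := bounds b hbw hb
  have hne : ((c.rotate w hw).takeUntil a ha').length ≠
      ((c.rotate w hw).takeUntil b hb').length := fun h =>
    hab (by rw [← Walk.getVert_length_takeUntil ha', h, Walk.getVert_length_takeUntil])
  omega

end LongestCycle

lemma exists_pivot_of_three_le_card_union {α : Type*} [DecidableEq α] {A B : Finset α}
    (hA : A.Nonempty) (hB : B.Nonempty) (h3 : 3 ≤ (A ∪ B).card) :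
    ∃ w a b, a ≠ b ∧ a ≠ w ∧ b ≠ w ∧
      (w ∈ A ∧ a ∈ B ∨ w ∈ B ∧ a ∈ A) ∧ (w ∈ A ∧ b ∈ B ∨ w ∈ B ∧ b ∈ A) := by
  by_cases hAB : Disjoint A B
  swap
  · obtain ⟨w, hwA, hwB⟩ := not_disjoint_iff.1 hAB
    have : 1 < ((A ∪ B).erase w).card := by
      rw [card_erase_of_mem (mem_union_left _ hwA)]
      omega
    obtain ⟨a, ha, b, hb, hab⟩ := one_lt_card.1 this
    rw [mem_erase, mem_union] at ha hb
    exact ⟨w, a, b, hab, ha.1, hb.1, by tauto, by tauto⟩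
  · rcases lt_or_ge 1 A.card with hA2 | hA1
    · obtain ⟨a, ha, b, hb, hab⟩ := one_lt_card.1 hA2
      obtain ⟨w, hw⟩ := hB
      exact ⟨w, a, b, hab, fun h => disjoint_left.1 hAB ha (h ▸ hw),
        fun h => disjoint_left.1 hAB hb (h ▸ hw), Or.inr ⟨hw, ha⟩, Or.inr ⟨hw, hb⟩⟩
    · have hB2 : 1 < B.card := by have := card_union_le A B; omega
      obtain ⟨a, ha, b, hb, hab⟩ := one_lt_card.1 hB2
      obtain ⟨w, hw⟩ := hA
      exact ⟨w, a, b, hab, fun h => disjoint_left.1 hAB hw (h ▸ ha),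
        fun h => disjoint_left.1 hAB hw (h ▸ hb), Or.inl ⟨hw, ha⟩, Or.inl ⟨hw, hb⟩⟩

theorem stmt_17_general [Fintype V] [DecidableEq V] (G : SimpleGraph V) [DecidableRel G.Adj]
    {u x₁ x₂ : V} (c : G.Walk u u) (P : G.Walk x₁ x₂)
    (hc : IsLongestCycle c) (hP : IsLongestPathOutside c P)
    (hpd : P.length + 1 = G.minDegree) :
    (3 ≤ (NC G c x₁ ∪ NC G c x₂).card → 2 * G.minDegree + 2 < c.length) ∧
    (c.length = 2 * G.minDegree + 2 → (NC G c x₁ ∪ NC G c x₂).card ≤ 2) := by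
  have hN₁ : (NC G c x₁).Nonempty := hP.NC_nonempty hpd.le
  have hN₂ : (NC G c x₂).Nonempty := hP.reverse.NC_nonempty (by simpa using hpd.le)
  have long : 3 ≤ (NC G c x₁ ∪ NC G c x₂).card → 2 * G.minDegree + 2 < c.length := by
    intro h3
    obtain ⟨w, a, b, hab, haw, hbw, ha, hb⟩ := exists_pivot_of_three_le_card_union hN₁ hN₂ h3
    have := hc.two_mul_length_add_five_le hP.1 hP.2.1 hab haw hbw ha hb
    omega
  exact ⟨long, fun hlen => by by_contra h; have := long (by omega); omega⟩

theorem stmt_17 [Fintype V] [DecidableEq V] (G : SimpleGraph V) [DecidableRel G.Adj]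
    (ht : OneTough G)
    {u x₁ x₂ : V} (c : G.Walk u u) (P : G.Walk x₁ x₂)
    (hc : IsLongestCycle c) (hP : IsLongestPathOutside c P)
    (hp2 : 2 ≤ P.length) (hpd : P.length + 1 = G.minDegree)
    (hseg : ∀ {a b : V} (I : G.Walk a b),
      IsSegment c (NC G c x₁ ∪ NC G c x₂) I →
      (a ∈ NC G c x₁ ∩ NC G c x₂ ∨ b ∈ NC G c x₁ ∩ NC G c x₂) →
      P.length + 2 ≤ I.length) :
    (3 ≤ (NC G c x₁ ∪ NC G c x₂).card → 2 * G.minDegree + 2 < c.length) ∧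
    (c.length = 2 * G.minDegree + 2 → (NC G c x₁ ∪ NC G c x₂).card ≤ 2) :=
  stmt_17_general G c P hc hP hpd

end Paper
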